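/- arXiv:2506.16295 — 3 statements merged into one kernel-verified Lean document; each statement's English description precedes it below -/
import Mathlib

section
/- Let P be a finite set, d a metric on P, p a probability mass function on P, and let ρ*_1,…,ρ*_L ∈ P be distinct centers minimizing (ρ_1,…,ρ_L) ↦ ∑_{ρ∈P} p(ρ) · min_ℓ d(ρ,ρ_ℓ). Assume every ρ with p(ρ) > 0 has a unique nearest center, and let N_ℓ = {ρ ∈ P : d(ρ,ρ*_ℓ) < d(ρ,ρ*_{ℓ'}) for all ℓ' ≠ ℓ}. Then the pmf q* = ∑_{ℓ=1}^L w*_ℓ δ_{ρ*_ℓ} with weights w*_ℓ = ∑_{ρ∈N_ℓ} p(ρ) attains the infimum of W_d(p,q) over all pmfs q supported on at most L points, and this infimum equals ∑_{ℓ=1}^L ∑_{ρ∈N_ℓ} d(ρ,ρ*_ℓ) p(ρ). -/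
open scoped Classical

/-- `p` is a probability mass function on the finite type `α`. -/
def IsPMF {α : Type*} [Fintype α] (p : α → ℝ) : Prop :=
  (∀ x, 0 ≤ p x) ∧ ∑ x, p x = 1

/-- `J` is a coupling of the pmfs `p` and `q`. -/
def IsCoupling {α : Type*} [Fintype α] (p q : α → ℝ) (J : α → α → ℝ) : Prop :=
  (∀ x y, 0 ≤ J x y) ∧ (∀ x, ∑ y, J x y = p x) ∧ (∀ y, ∑ x, J x y = q y)

/-- The Wasserstein distance between `p` and `q` with ground cost `d`:
the infimum over couplings of the total transport cost. -/
noncomputable def Wass {α : Type*} [Fintype α] (d : α → α → ℝ) (p q : α → ℝ) : ℝ :=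
  sInf { c : ℝ | ∃ J : α → α → ℝ, IsCoupling p q J ∧ c = ∑ x, ∑ y, d x y * J x y }

/-- `d` is a metric on `α`. -/
def IsMetric {α : Type*} (d : α → α → ℝ) : Prop :=
  (∀ x y, d x y = 0 ↔ x = y) ∧ (∀ x y, d x y = d y x) ∧
    (∀ x y z, d x z ≤ d x y + d y z)


section AuxLemmas

variable {α : Type*} [Fintype α]

lemma metric_nonneg' {d : α → α → ℝ} (hd : IsMetric d) (x y : α) : 0 ≤ d x y := by
  have h1 := hd.2.2 x y x
  rw [(hd.1 x x).mpr rfl, hd.2.1 y x] at h1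
  linarith

lemma wass_le_cost' {d : α → α → ℝ} (hd : IsMetric d)
    {p q : α → ℝ} {J : α → α → ℝ} (hJ : IsCoupling p q J) :
    Wass d p q ≤ ∑ x, ∑ y, d x y * J x y := by
  apply csInf_le
  · exact ⟨0, by
      rintro v ⟨J', hJ', rfl⟩
      exact Finset.sum_nonneg fun x _ => Finset.sum_nonneg fun y _ =>
        mul_nonneg (metric_nonneg' hd x y) (hJ'.1 x y)⟩
  · exact ⟨J, hJ, rfl⟩

lemma le_wass {d : α → α → ℝ}
    {p q : α → ℝ} (hp : IsPMF p) (hq : IsPMF q) {b : ℝ}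
    (h : ∀ J : α → α → ℝ, IsCoupling p q J → b ≤ ∑ x, ∑ y, d x y * J x y) :
    b ≤ Wass d p q := by
  apply le_csInf
  · refine ⟨_, fun x y => p x * q y, ⟨fun x y => mul_nonneg (hp.1 x) (hq.1 y), ?_, ?_⟩, rfl⟩
    · intro x; rw [← Finset.mul_sum, hq.2, mul_one]
    · intro y; rw [← Finset.sum_mul, hp.2, one_mul]
  · rintro v ⟨J, hJ, rfl⟩; exact h J hJ

lemma opt_le_wass {d : α → α → ℝ}
    {p : α → ℝ} (hp : IsPMF p) {L : ℕ} (hL : 1 ≤ L) (c : Fin L → α)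
    (hmin : ∀ c' : Fin L → α,
      (∑ ρ, p ρ * Finset.univ.inf' ⟨⟨0, hL⟩, Finset.mem_univ _⟩ (fun ℓ => d ρ (c ℓ))) ≤
        ∑ ρ, p ρ * Finset.univ.inf' ⟨⟨0, hL⟩, Finset.mem_univ _⟩ (fun ℓ => d ρ (c' ℓ)))
    {q : α → ℝ} (hq : IsPMF q) {s : Finset α} (hcard : s.card ≤ L)
    (hsupp : ∀ x, q x ≠ 0 → x ∈ s) :
    (∑ ρ, p ρ * Finset.univ.inf' ⟨⟨0, hL⟩, Finset.mem_univ _⟩ (fun ℓ => d ρ (c ℓ))) ≤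
      Wass d p q := by
  have hsne : s.Nonempty := by
    by_contra h
    rw [Finset.not_nonempty_iff_eq_empty] at h
    have h0 : ∀ x, q x = 0 := fun x => by
      by_contra hx; have := hsupp x hx; simp [h] at this
    have h1 := hq.2
    rw [Finset.sum_eq_zero (fun x _ => h0 x)] at h1
    exact zero_ne_one h1
  obtain ⟨y₀, hy₀⟩ := hsne
  set c' : Fin L → α := fun ℓ =>
    if h : (ℓ : ℕ) < s.card then s.toList.get ⟨ℓ, by rwa [Finset.length_toList]⟩ else y₀
    with hc'
  have hcov : ∀ x ∈ s, ∃ ℓ : Fin L, c' ℓ = x := by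
    intro x hx
    rw [← Finset.mem_toList, List.mem_iff_get] at hx
    obtain ⟨i, hi⟩ := hx
    have hilt : (i : ℕ) < s.card := lt_of_lt_of_eq i.2 (Finset.length_toList s)
    refine ⟨⟨i, lt_of_lt_of_le hilt hcard⟩, ?_⟩
    simp only [hc', dif_pos hilt]
    convert hi
  refine le_trans (hmin c') (le_wass hp hq ?_)
  intro J hJ
  have key : ∀ ρ x, (Finset.univ.inf' ⟨⟨0, hL⟩, Finset.mem_univ _⟩ (fun ℓ => d ρ (c' ℓ))) * J ρ x
      ≤ d ρ x * J ρ x := by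
    intro ρ x
    rcases eq_or_lt_of_le (hJ.1 ρ x) with h0 | hpos
    · rw [← h0]; simp
    · have hxs : x ∈ s := by
        apply hsupp
        have hcol := hJ.2.2 x
        intro hx0
        have hall : ∀ ρ', J ρ' x = 0 := by
          intro ρ'
          by_contra hne
          have hpos' : 0 < J ρ' x := lt_of_le_of_ne (hJ.1 ρ' x) (Ne.symm hne)
          have hsum : 0 < ∑ ρ'', J ρ'' x :=
            Finset.sum_pos' (fun i _ => hJ.1 i x) ⟨ρ', Finset.mem_univ _, hpos'⟩
          rw [hcol, hx0] at hsum; exact lt_irrefl 0 hsum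
        exact absurd (hall ρ) (ne_of_gt hpos)
      obtain ⟨ℓ, hℓ⟩ := hcov x hxs
      have hinf : (Finset.univ.inf' ⟨⟨0, hL⟩, Finset.mem_univ _⟩ (fun ℓ => d ρ (c' ℓ))) ≤ d ρ x := by
        rw [← hℓ]; exact Finset.inf'_le _ (Finset.mem_univ ℓ)
      exact mul_le_mul_of_nonneg_right hinf (hJ.1 ρ x)
  calc (∑ ρ, p ρ * Finset.univ.inf' ⟨⟨0, hL⟩, Finset.mem_univ _⟩ (fun ℓ => d ρ (c' ℓ)))
      = ∑ ρ, ∑ x, (Finset.univ.inf' ⟨⟨0, hL⟩, Finset.mem_univ _⟩ (fun ℓ => d ρ (c' ℓ))) * J ρ x := by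
        apply Finset.sum_congr rfl; intro ρ _
        rw [← Finset.mul_sum, hJ.2.1 ρ, mul_comm]
    _ ≤ ∑ x, ∑ y, d x y * J x y := by
        apply Finset.sum_le_sum; intro ρ _
        apply Finset.sum_le_sum; intro x _
        exact key ρ x

end AuxLemmas

section Regions

variable {α : Type*} [Fintype α] {L : ℕ}

/-- The region of attraction of center `ℓ`. -/
noncomputable def regions (d : α → α → ℝ) (c : Fin L → α) : Fin L → Finset α :=
  fun ℓ => Finset.univ.filter (fun ρ => ∀ ℓ', ℓ' ≠ ℓ → d ρ (c ℓ) < d ρ (c ℓ'))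

lemma mem_regions {d : α → α → ℝ} {c : Fin L → α} {ρ : α} {ℓ : Fin L} :
    ρ ∈ regions d c ℓ ↔ ∀ ℓ', ℓ' ≠ ℓ → d ρ (c ℓ) < d ρ (c ℓ') := by
  simp [regions]

lemma regions_disjoint {d : α → α → ℝ} {c : Fin L → α} :
    Set.PairwiseDisjoint ↑(Finset.univ : Finset (Fin L)) (regions d c) := by
  intro ℓ _ ℓ' _ hne
  simp only [Function.onFun]
  rw [Finset.disjoint_left]
  intro ρ h1 h2
  have a1 := (mem_regions.mp h1) ℓ' (Ne.symm hne)
  have a2 := (mem_regions.mp h2) ℓ hne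
  linarith

lemma sum_regions {d : α → α → ℝ} {c : Fin L → α} {p : α → ℝ}
    (hp0 : ∀ x, 0 ≤ p x)
    (huniq : ∀ ρ, 0 < p ρ → ∃ ℓ : Fin L, ∀ ℓ', ℓ' ≠ ℓ → d ρ (c ℓ) < d ρ (c ℓ'))
    (f : α → ℝ) (hf : ∀ ρ, p ρ = 0 → f ρ = 0) :
    ∑ ℓ, ∑ ρ ∈ regions d c ℓ, f ρ = ∑ ρ, f ρ := by
  rw [← Finset.sum_biUnion regions_disjoint]
  apply Finset.sum_subset (Finset.subset_univ _)
  intro ρ _ hρ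
  apply hf
  by_contra hne
  have hpos : 0 < p ρ := lt_of_le_of_ne (hp0 ρ) (Ne.symm hne)
  obtain ⟨ℓ, hℓ⟩ := huniq ρ hpos
  exact hρ (Finset.mem_biUnion.mpr ⟨ℓ, Finset.mem_univ _, mem_regions.mpr hℓ⟩)

lemma regions_unique {d : α → α → ℝ} {c : Fin L → α} {ρ : α} {ℓ ℓ' : Fin L}
    (h : ρ ∈ regions d c ℓ) (h' : ρ ∈ regions d c ℓ') : ℓ = ℓ' := by
  by_contra hne
  have a1 := (mem_regions.mp h) ℓ' (Ne.symm hne)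
  have a2 := (mem_regions.mp h') ℓ hne
  linarith

end Regions

section Coupling

variable {α : Type*} [Fintype α] {L : ℕ}

/-- The optimal L-point pmf. -/
noncomputable def qstar (d : α → α → ℝ) (p : α → ℝ) (c : Fin L → α) : α → ℝ :=
  fun x => ∑ ℓ, (∑ ρ ∈ regions d c ℓ, p ρ) * (if x = c ℓ then 1 else 0)

/-- The explicit optimal coupling. -/
noncomputable def Jstar (d : α → α → ℝ) (p : α → ℝ) (c : Fin L → α) : α → α → ℝ :=
  fun ρ x => ∑ ℓ, if ρ ∈ regions d c ℓ ∧ x = c ℓ then p ρ else 0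

lemma jstar_coupling {d : α → α → ℝ} {p : α → ℝ} {c : Fin L → α} (hp : IsPMF p)
    (huniq : ∀ ρ, 0 < p ρ → ∃ ℓ : Fin L, ∀ ℓ', ℓ' ≠ ℓ → d ρ (c ℓ) < d ρ (c ℓ')) :
    IsCoupling p (qstar d p c) (Jstar d p c) := by
  refine ⟨fun ρ x => Finset.sum_nonneg fun ℓ _ => ?_, fun ρ => ?_, fun x => ?_⟩
  · split
    · exact hp.1 ρ
    · exact le_refl 0
  · -- row marginal
    unfold Jstar
    rw [Finset.sum_comm]
    have inner : ∀ ℓ, (∑ x, if ρ ∈ regions d c ℓ ∧ x = c ℓ then p ρ else 0)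
        = if ρ ∈ regions d c ℓ then p ρ else 0 := by
      intro ℓ
      by_cases h : ρ ∈ regions d c ℓ
      · simp [h, Finset.sum_ite_eq']
      · simp [h]
    rw [Finset.sum_congr rfl fun ℓ _ => inner ℓ]
    rcases eq_or_lt_of_le (hp.1 ρ) with h0 | hpos
    · simp [← h0]
    · obtain ⟨ℓ₀, hℓ₀⟩ := huniq ρ hpos
      have hmem : ρ ∈ regions d c ℓ₀ := mem_regions.mpr hℓ₀
      rw [Finset.sum_eq_single ℓ₀
        (fun ℓ _ hne => if_neg fun hm => hne (regions_unique hm hmem))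
        (fun h => absurd (Finset.mem_univ _) h), if_pos hmem]
  · -- column marginal
    unfold Jstar
    rw [Finset.sum_comm]
    unfold qstar
    apply Finset.sum_congr rfl
    intro ℓ _
    by_cases h : x = c ℓ
    · simp [h, Finset.sum_ite_mem]
    · simp [h]

lemma jstar_cost {d : α → α → ℝ} {p : α → ℝ} {c : Fin L → α} :
    ∑ ρ, ∑ x, d ρ x * Jstar d p c ρ x
      = ∑ ℓ, ∑ ρ ∈ regions d c ℓ, d ρ (c ℓ) * p ρ := by
  have step : ∀ ρ x, d ρ x * Jstar d p c ρ x
      = ∑ ℓ, if ρ ∈ regions d c ℓ ∧ x = c ℓ then d ρ x * p ρ else 0 := by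
    intro ρ x
    unfold Jstar
    rw [Finset.mul_sum]
    apply Finset.sum_congr rfl
    intro ℓ _
    split <;> simp
  simp_rw [step]
  have h1 : ∀ ρ : α, (∑ x, ∑ ℓ, if ρ ∈ regions d c ℓ ∧ x = c ℓ then d ρ x * p ρ else 0)
      = ∑ ℓ, ∑ x, if ρ ∈ regions d c ℓ ∧ x = c ℓ then d ρ x * p ρ else 0 :=
    fun ρ => Finset.sum_comm
  rw [Finset.sum_congr rfl fun ρ _ => h1 ρ, Finset.sum_comm]
  apply Finset.sum_congr rfl
  intro ℓ _
  have inner : ∀ ρ, (∑ x, if ρ ∈ regions d c ℓ ∧ x = c ℓ then d ρ x * p ρ else 0)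
      = if ρ ∈ regions d c ℓ then d ρ (c ℓ) * p ρ else 0 := by
    intro ρ
    by_cases h : ρ ∈ regions d c ℓ
    · simp [h, Finset.sum_ite_eq']
    · simp [h]
  rw [Finset.sum_congr rfl fun ρ _ => inner ρ]
  simp [Finset.sum_ite_mem]

end Coupling

section Final

variable {α : Type*} [Fintype α] {L : ℕ}

lemma qstar_pmf {d : α → α → ℝ} {p : α → ℝ} {c : Fin L → α} (hp : IsPMF p)
    (huniq : ∀ ρ, 0 < p ρ → ∃ ℓ : Fin L, ∀ ℓ', ℓ' ≠ ℓ → d ρ (c ℓ) < d ρ (c ℓ')) :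
    IsPMF (qstar d p c) := by
  constructor
  · intro x
    apply Finset.sum_nonneg
    intro ℓ _
    apply mul_nonneg (Finset.sum_nonneg fun ρ _ => hp.1 ρ)
    split <;> norm_num
  · unfold qstar
    rw [Finset.sum_comm]
    have h1 : ∀ ℓ : Fin L, (∑ x, (∑ ρ ∈ regions d c ℓ, p ρ) * (if x = c ℓ then 1 else 0))
        = ∑ ρ ∈ regions d c ℓ, p ρ := by
      intro ℓ
      rw [← Finset.mul_sum]
      simp [Finset.sum_ite_eq']
    rw [Finset.sum_congr rfl fun ℓ _ => h1 ℓ, sum_regions hp.1 huniq p (fun _ h => h), hp.2]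

lemma dist_eq_inf {d : α → α → ℝ} {c : Fin L → α} (hL : 1 ≤ L)
    {ρ : α} {ℓ : Fin L} (hρ : ρ ∈ regions d c ℓ) :
    d ρ (c ℓ) = Finset.univ.inf' ⟨⟨0, hL⟩, Finset.mem_univ _⟩ (fun ℓ' => d ρ (c ℓ')) := by
  apply le_antisymm
  · apply Finset.le_inf'
    intro ℓ' _
    by_cases h : ℓ' = ℓ
    · subst h; exact le_refl _
    · exact (mem_regions.mp hρ ℓ' h).le
  · exact Finset.inf'_le _ (Finset.mem_univ ℓ)

lemma cost_eq_opt {d : α → α → ℝ} {p : α → ℝ} {c : Fin L → α} (hL : 1 ≤ L) (hp : IsPMF p)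
    (huniq : ∀ ρ, 0 < p ρ → ∃ ℓ : Fin L, ∀ ℓ', ℓ' ≠ ℓ → d ρ (c ℓ) < d ρ (c ℓ')) :
    ∑ ℓ, ∑ ρ ∈ regions d c ℓ, d ρ (c ℓ) * p ρ
      = ∑ ρ, p ρ * Finset.univ.inf' ⟨⟨0, hL⟩, Finset.mem_univ _⟩ (fun ℓ => d ρ (c ℓ)) := by
  have h1 : ∀ ℓ : Fin L, ∀ ρ ∈ regions d c ℓ, d ρ (c ℓ) * p ρ
      = p ρ * Finset.univ.inf' ⟨⟨0, hL⟩, Finset.mem_univ _⟩ (fun ℓ' => d ρ (c ℓ')) := by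
    intro ℓ ρ hρ
    rw [← dist_eq_inf hL hρ, mul_comm]
  rw [Finset.sum_congr rfl fun ℓ _ => Finset.sum_congr rfl (h1 ℓ)]
  exact sum_regions hp.1 huniq _ (fun ρ h => by rw [h, zero_mul])

end Final


/-- If `c 0, …, c (L-1)` are distinct centers minimizing the objective
`∑_ρ p ρ · min_ℓ d (ρ, c ℓ)`, and every point with positive mass has a unique nearest
center, then the pmf putting weight `w_ℓ = ∑_{ρ ∈ N_ℓ} p ρ` on `c ℓ` (where `N_ℓ` is the
region of attraction of `c ℓ`) attains the infimum of `W_d(p, q)` over pmfs `q` supported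
on at most `L` points, and this infimum equals `∑_ℓ ∑_{ρ ∈ N_ℓ} d (ρ, c ℓ) p ρ`. -/
theorem wasabi_posterior_attains_inf
    {α : Type*} [Fintype α] [Nonempty α]
    (d : α → α → ℝ) (hd : IsMetric d)
    (p : α → ℝ) (hp : IsPMF p)
    (L : ℕ) (hL : 1 ≤ L)
    (c : Fin L → α) (hinj : Function.Injective c)
    (hmin : ∀ c' : Fin L → α,
      (∑ ρ, p ρ * Finset.univ.inf' ⟨⟨0, hL⟩, Finset.mem_univ _⟩ (fun ℓ => d ρ (c ℓ))) ≤
        ∑ ρ, p ρ * Finset.univ.inf' ⟨⟨0, hL⟩, Finset.mem_univ _⟩ (fun ℓ => d ρ (c' ℓ)))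
    (huniq : ∀ ρ, 0 < p ρ → ∃ ℓ : Fin L, ∀ ℓ', ℓ' ≠ ℓ → d ρ (c ℓ) < d ρ (c ℓ')) :
    (Wass d p (fun x => ∑ ℓ,
        (∑ ρ ∈ Finset.univ.filter (fun ρ => ∀ ℓ', ℓ' ≠ ℓ → d ρ (c ℓ) < d ρ (c ℓ')), p ρ) *
          (if x = c ℓ then 1 else 0)) =
      sInf { v : ℝ | ∃ q : α → ℝ, IsPMF q ∧
        (∃ s : Finset α, s.card ≤ L ∧ ∀ x, q x ≠ 0 → x ∈ s) ∧ v = Wass d p q }) ∧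
    Wass d p (fun x => ∑ ℓ,
        (∑ ρ ∈ Finset.univ.filter (fun ρ => ∀ ℓ', ℓ' ≠ ℓ → d ρ (c ℓ) < d ρ (c ℓ')), p ρ) *
          (if x = c ℓ then 1 else 0)) =
      ∑ ℓ, ∑ ρ ∈ Finset.univ.filter (fun ρ => ∀ ℓ', ℓ' ≠ ℓ → d ρ (c ℓ) < d ρ (c ℓ')),
        d ρ (c ℓ) * p ρ := by
  classical
  have hq1 : (fun x => ∑ ℓ,
      (∑ ρ ∈ Finset.univ.filter (fun ρ => ∀ ℓ', ℓ' ≠ ℓ → d ρ (c ℓ) < d ρ (c ℓ')), p ρ) *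
        (if x = c ℓ then 1 else 0)) = qstar d p c := rfl
  have hc1 : (∑ ℓ, ∑ ρ ∈ Finset.univ.filter (fun ρ => ∀ ℓ', ℓ' ≠ ℓ → d ρ (c ℓ) < d ρ (c ℓ')),
      d ρ (c ℓ) * p ρ) = ∑ ℓ, ∑ ρ ∈ regions d c ℓ, d ρ (c ℓ) * p ρ := rfl
  rw [hq1, hc1]
  have hqpmf : IsPMF (qstar d p c) := qstar_pmf hp huniq
  have hsupp : ∀ x, qstar d p c x ≠ 0 → x ∈ Finset.image c Finset.univ := by
    intro x hx
    by_contra h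
    apply hx
    apply Finset.sum_eq_zero
    intro ℓ _
    rw [if_neg, mul_zero]
    intro he; exact h (Finset.mem_image.mpr ⟨ℓ, Finset.mem_univ _, he.symm⟩)
  have hcard : (Finset.image c Finset.univ).card ≤ L :=
    le_trans Finset.card_image_le (by simp)
  have hWle : Wass d p (qstar d p c) ≤ ∑ ℓ, ∑ ρ ∈ regions d c ℓ, d ρ (c ℓ) * p ρ := by
    rw [← jstar_cost]
    exact wass_le_cost' hd (jstar_coupling hp huniq)
  have hWge : (∑ ρ, p ρ * Finset.univ.inf' ⟨⟨0, hL⟩, Finset.mem_univ _⟩ (fun ℓ => d ρ (c ℓ)))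
      ≤ Wass d p (qstar d p c) :=
    opt_le_wass hp hL c hmin hqpmf hcard hsupp
  have hWeq : Wass d p (qstar d p c) = ∑ ℓ, ∑ ρ ∈ regions d c ℓ, d ρ (c ℓ) * p ρ :=
    le_antisymm hWle (by rw [cost_eq_opt hL hp huniq]; exact hWge)
  refine ⟨?_, hWeq⟩
  apply le_antisymm
  · refine le_csInf ?_ ?_
    · exact ⟨Wass d p (qstar d p c), qstar d p c, hqpmf, ⟨_, hcard, hsupp⟩, rfl⟩
    rintro v ⟨q', hq', ⟨s, hs1, hs2⟩, rfl⟩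
    calc Wass d p (qstar d p c) = _ := hWeq
      _ = ∑ ρ, p ρ * Finset.univ.inf' ⟨⟨0, hL⟩, Finset.mem_univ _⟩ (fun ℓ => d ρ (c ℓ)) :=
          cost_eq_opt hL hp huniq
      _ ≤ Wass d p q' := opt_le_wass hp hL c hmin hq' hs1 hs2
  · apply csInf_le
    · refine ⟨∑ ρ, p ρ * Finset.univ.inf' ⟨⟨0, hL⟩, Finset.mem_univ _⟩ (fun ℓ => d ρ (c ℓ)), ?_⟩
      rintro v ⟨q', hq', ⟨s, hs1, hs2⟩, rfl⟩
      exact opt_le_wass hp hL c hmin hq' hs1 hs2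
    · exact ⟨qstar d p c, hqpmf, ⟨_, hcard, hsupp⟩, rfl⟩
end

section
/- Let P be a finite set, d a metric on P, and ρ^{(1)},…,ρ^{(T)} ∈ P. Define the empirical pmf p̂(ρ) = |{t : ρ^{(t)} = ρ}| / T. Then for any L ≥ 1, the infimum over pmfs q on P supported on at most L points of W_d(p̂, q) equals the minimum over L-tuples (ρ_1,…,ρ_L) ∈ P^L of (1/T) ∑_{t=1}^T min_{1≤ℓ≤L} d(ρ^{(t)}, ρ_ℓ). -/
open scoped Classical

lemma sum_emp {α : Type*} [Fintype α] (T : ℕ) (ρs : Fin T → α) (f : α → ℝ) :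
    ∑ x, ((Finset.univ.filter (fun t => ρs t = x)).card : ℝ) / (T:ℝ) * f x
      = (1/(T:ℝ)) * ∑ t, f (ρs t) := by
  have h1 : ∀ x : α, ((Finset.univ.filter (fun t => ρs t = x)).card : ℝ)
      = ∑ t : Fin T, if ρs t = x then (1:ℝ) else 0 := by
    intro x
    rw [Finset.card_filter]
    push_cast
    rfl
  calc ∑ x, ((Finset.univ.filter (fun t => ρs t = x)).card : ℝ) / (T:ℝ) * f x
      = ∑ x, (1/(T:ℝ)) * ∑ t : Fin T, (if ρs t = x then f x else 0) := by
        refine Finset.sum_congr rfl fun x _ => ?_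
        rw [h1, Finset.mul_sum, div_mul_eq_mul_div, Finset.sum_mul, Finset.sum_div]
        refine Finset.sum_congr rfl fun t _ => ?_
        split <;> ring
    _ = (1/(T:ℝ)) * ∑ t, ∑ x, (if ρs t = x then f x else 0) := by
        rw [← Finset.mul_sum, Finset.sum_comm]
    _ = (1/(T:ℝ)) * ∑ t, f (ρs t) := by
        refine congrArg _ (Finset.sum_congr rfl fun t _ => ?_)
        simp [Finset.sum_ite_eq]

lemma product_coupling {α : Type*} [Fintype α] (p q : α → ℝ)
    (hp : IsPMF p) (hq : IsPMF q) : IsCoupling p q (fun x y => p x * q y) := by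
  refine ⟨fun x y => mul_nonneg (hp.1 x) (hq.1 y), fun x => ?_, fun y => ?_⟩
  · rw [← Finset.mul_sum, hq.2, mul_one]
  · rw [← Finset.sum_mul, hp.2, one_mul]

lemma wass_set_nonempty {α : Type*} [Fintype α] (d : α → α → ℝ) (p q : α → ℝ)
    (hp : IsPMF p) (hq : IsPMF q) :
    { c : ℝ | ∃ J : α → α → ℝ, IsCoupling p q J ∧ c = ∑ x, ∑ y, d x y * J x y }.Nonempty :=
  ⟨_, fun x y => p x * q y, product_coupling p q hp hq, rfl⟩

lemma wass_set_bddBelow {α : Type*} [Fintype α] (d : α → α → ℝ) (hdnn : ∀ x y, 0 ≤ d x y)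
    (p q : α → ℝ) :
    BddBelow { c : ℝ | ∃ J : α → α → ℝ, IsCoupling p q J ∧ c = ∑ x, ∑ y, d x y * J x y } := by
  refine ⟨0, fun c hc => ?_⟩
  obtain ⟨J, hJ, rfl⟩ := hc
  exact Finset.sum_nonneg fun x _ => Finset.sum_nonneg fun y _ =>
    mul_nonneg (hdnn x y) (hJ.1 x y)

lemma wass_nonneg {α : Type*} [Fintype α] (d : α → α → ℝ) (hdnn : ∀ x y, 0 ≤ d x y)
    (p q : α → ℝ) (hp : IsPMF p) (hq : IsPMF q) : 0 ≤ Wass d p q := by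
  refine le_csInf (wass_set_nonempty d p q hp hq) fun c hc => ?_
  obtain ⟨J, hJ, rfl⟩ := hc
  exact Finset.sum_nonneg fun x _ => Finset.sum_nonneg fun y _ =>
    mul_nonneg (hdnn x y) (hJ.1 x y)

/-- For the empirical pmf of draws `ρs 1, …, ρs T`, the infimum over pmfs `q` supported on
at most `L` points of `W_d(p̂, q)` equals the minimum over `L`-tuples of
`(1/T) ∑_t min_ℓ d (ρs t, c ℓ)`. -/
theorem wasserstein_approx_empirical_eq_min_over_tuples
    {α : Type*} [Fintype α] [Nonempty α]
    (d : α → α → ℝ) (hd : IsMetric d)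
    (T : ℕ) (hT : 0 < T) (ρs : Fin T → α)
    (L : ℕ) (hL : 1 ≤ L) :
    sInf { w : ℝ | ∃ q : α → ℝ, IsPMF q ∧
        (∃ s : Finset α, s.card ≤ L ∧ ∀ x, q x ≠ 0 → x ∈ s) ∧
        w = Wass d (fun ρ => ((Finset.univ.filter (fun t => ρs t = ρ)).card : ℝ) / T) q } =
      Finset.univ.inf' Finset.univ_nonempty (fun c : Fin L → α =>
        (1 / (T : ℝ)) *
          ∑ t, Finset.univ.inf' ⟨⟨0, hL⟩, Finset.mem_univ _⟩ (fun ℓ => d (ρs t) (c ℓ))) := by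
  obtain ⟨hd0, hdsymm, hdtri⟩ := hd
  have hdnn : ∀ x y, 0 ≤ d x y := by
    intro x y
    have h1 := hdtri x y x
    have h2 := (hd0 x x).2 rfl
    have h3 := hdsymm y x
    linarith
  have hTne : (T : ℝ) ≠ 0 := Nat.cast_ne_zero.2 hT.ne'
  set p : α → ℝ := fun ρ => ((Finset.univ.filter (fun t => ρs t = ρ)).card : ℝ) / T with hpdef
  have hpf : ∀ f : α → ℝ, ∑ x, p x * f x = (1/(T:ℝ)) * ∑ t, f (ρs t) :=
    fun f => sum_emp T ρs f
  have hpnn : ∀ x, 0 ≤ p x := fun x => div_nonneg (Nat.cast_nonneg _) (Nat.cast_nonneg _)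
  have hppmf : IsPMF p := by
    refine ⟨hpnn, ?_⟩
    have h := hpf (fun _ => 1)
    simp only [mul_one] at h
    rw [h, Finset.sum_const, Finset.card_univ, Fintype.card_fin]
    simp
    field_simp
  set g : (Fin L → α) → α → ℝ :=
    fun c x => Finset.univ.inf' ⟨⟨0, hL⟩, Finset.mem_univ _⟩ (fun ℓ => d x (c ℓ)) with hgdef
  set F : (Fin L → α) → ℝ := fun c => (1/(T:ℝ)) * ∑ t, g c (ρs t) with hFdef
  set S : Set ℝ := { w : ℝ | ∃ q : α → ℝ, IsPMF q ∧
        (∃ s : Finset α, s.card ≤ L ∧ ∀ x, q x ≠ 0 → x ∈ s) ∧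
        w = Wass d p q } with hSdef
  show sInf S = Finset.univ.inf' Finset.univ_nonempty F
  set m : ℝ := Finset.univ.inf' Finset.univ_nonempty F with hmdef
  -- the minimizing tuple and the nearest-center map
  obtain ⟨c₀, -, hc₀⟩ := Finset.exists_mem_eq_inf' (Finset.univ_nonempty) F
  have hnear : ∀ x : α, ∃ ℓ : Fin L, g c₀ x = d x (c₀ ℓ) := by
    intro x
    obtain ⟨ℓ, -, h⟩ := Finset.exists_mem_eq_inf'
      (⟨⟨0, hL⟩, Finset.mem_univ _⟩ : (Finset.univ : Finset (Fin L)).Nonempty)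
      (fun ℓ => d x (c₀ ℓ))
    exact ⟨ℓ, h⟩
  choose ℓs hℓs using hnear
  set q₀ : α → ℝ := fun y => ∑ x, if c₀ (ℓs x) = y then p x else 0 with hq₀def
  set J₀ : α → α → ℝ := fun x y => if c₀ (ℓs x) = y then p x else 0 with hJ₀def
  have hJ₀nn : ∀ x y, 0 ≤ J₀ x y := by
    intro x y
    simp only [hJ₀def]
    split
    · exact hpnn x
    · exact le_refl 0
  have hJ₀row : ∀ x, ∑ y, J₀ x y = p x := by
    intro x; simp [hJ₀def, Finset.sum_ite_eq]
  have hq₀pmf : IsPMF q₀ := by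
    constructor
    · intro y
      refine Finset.sum_nonneg fun x _ => ?_
      split
      · exact hpnn x
      · exact le_refl 0
    · rw [show ∑ y, q₀ y = ∑ y, ∑ x, J₀ x y from rfl, Finset.sum_comm]
      rw [Finset.sum_congr rfl fun x _ => hJ₀row x]
      exact hppmf.2
  have hJ₀coupling : IsCoupling p q₀ J₀ := ⟨hJ₀nn, hJ₀row, fun y => rfl⟩
  have hcost₀ : ∑ x, ∑ y, d x y * J₀ x y = F c₀ := by
    have hinner : ∀ x, ∑ y, d x y * J₀ x y = p x * g c₀ x := by
      intro x
      have h1 : ∀ y, d x y * J₀ x y = if c₀ (ℓs x) = y then d x y * p x else 0 := by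
        intro y; simp only [hJ₀def, mul_ite, mul_zero]
      rw [Finset.sum_congr rfl fun y _ => h1 y, Finset.sum_ite_eq]
      simp only [Finset.mem_univ, if_true, ← hℓs x]
      ring
    rw [Finset.sum_congr rfl fun x _ => hinner x, hpf (g c₀)]
  have hq₀supp : ∃ s : Finset α, s.card ≤ L ∧ ∀ x, q₀ x ≠ 0 → x ∈ s := by
    refine ⟨Finset.image c₀ Finset.univ, ?_, ?_⟩
    · calc (Finset.image c₀ Finset.univ).card ≤ (Finset.univ : Finset (Fin L)).card :=
          Finset.card_image_le
        _ = L := by simp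
    · intro y hy
      have hex : ∃ x ∈ (Finset.univ : Finset α), ¬ ((if c₀ (ℓs x) = y then p x else 0) = 0) := by
        by_contra hcon
        push_neg at hcon
        exact hy (Finset.sum_eq_zero fun x hx => hcon x hx)
      obtain ⟨x, -, hx⟩ := hex
      have hxy : c₀ (ℓs x) = y := by by_contra h; simp [h] at hx
      exact hxy ▸ Finset.mem_image_of_mem c₀ (Finset.mem_univ _)
  -- lower bound: every element of S is ≥ m
  have hlow : ∀ w ∈ S, m ≤ w := by
    rintro w ⟨q, hq, ⟨s, hsL, hsupp⟩, rfl⟩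
    refine le_csInf (wass_set_nonempty d p q hppmf hq) ?_
    rintro v ⟨J, hJ, rfl⟩
    have hsne : ∃ x₀, x₀ ∈ s := by
      have hex : ∃ x, q x ≠ 0 := by
        by_contra hcon
        push_neg at hcon
        have h2 := hq.2
        rw [Finset.sum_eq_zero (fun x _ => hcon x)] at h2
        norm_num at h2
      obtain ⟨x, hx⟩ := hex
      exact ⟨x, hsupp x hx⟩
    obtain ⟨x₀, hx₀⟩ := hsne
    set e := s.equivFin with hedef
    set c : Fin L → α := fun ℓ =>
      if h : (ℓ : ℕ) < s.card then (e.symm ⟨ℓ, h⟩ : α) else x₀ with hcdef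
    have hcsurj : ∀ y ∈ s, ∃ ℓ : Fin L, c ℓ = y := by
      intro y hy
      set i : Fin s.card := e ⟨y, hy⟩ with hidef
      refine ⟨⟨(i : ℕ), lt_of_lt_of_le i.isLt hsL⟩, ?_⟩
      have hlt : ((⟨(i : ℕ), lt_of_lt_of_le i.isLt hsL⟩ : Fin L) : ℕ) < s.card := i.isLt
      simp only [hcdef, dif_pos hlt]
      have h2 : e.symm ⟨(i : ℕ), hlt⟩ = (⟨y, hy⟩ : {x // x ∈ s}) := by
        have h3 : (⟨(i : ℕ), hlt⟩ : Fin s.card) = i := rfl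
        rw [h3, hidef, Equiv.symm_apply_apply]
      exact congrArg Subtype.val h2
    have hterm : ∀ x y, g c x * J x y ≤ d x y * J x y := by
      intro x y
      rcases eq_or_ne (J x y) 0 with h | h
      · simp [h]
      · have hJpos : 0 < J x y := lt_of_le_of_ne (hJ.1 x y) (Ne.symm h)
        have hqy : q y ≠ 0 := by
          have hle : J x y ≤ ∑ x', J x' y :=
            Finset.single_le_sum (fun x' _ => hJ.1 x' y) (Finset.mem_univ x)
          rw [hJ.2.2 y] at hle
          exact ne_of_gt (lt_of_lt_of_le hJpos hle)
        obtain ⟨ℓ, hℓ⟩ := hcsurj y (hsupp y hqy)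
        have hgle : g c x ≤ d x y := by
          have h4 := Finset.inf'_le (fun ℓ' => d x (c ℓ')) (Finset.mem_univ ℓ)
          rw [hℓ] at h4
          exact h4
        exact mul_le_mul_of_nonneg_right hgle (hJ.1 x y)
    have h1 : ∑ x, p x * g c x ≤ ∑ x, ∑ y, d x y * J x y := by
      calc ∑ x, p x * g c x = ∑ x, ∑ y, g c x * J x y := by
            refine Finset.sum_congr rfl fun x _ => ?_
            rw [← Finset.mul_sum, hJ.2.1 x]
            ring
        _ ≤ _ := Finset.sum_le_sum fun x _ => Finset.sum_le_sum fun y _ => hterm x y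
    rw [hpf (g c)] at h1
    have h2 : m ≤ F c := Finset.inf'_le F (Finset.mem_univ c)
    exact le_trans h2 h1
  -- upper bound
  have hSbdd : BddBelow S := by
    refine ⟨0, fun w hw => ?_⟩
    obtain ⟨q, hq, -, rfl⟩ := hw
    exact wass_nonneg d hdnn p q hppmf hq
  have hwS : Wass d p q₀ ∈ S := ⟨q₀, hq₀pmf, hq₀supp, rfl⟩
  have hw_le : Wass d p q₀ ≤ F c₀ :=
    csInf_le (wass_set_bddBelow d hdnn p q₀) ⟨J₀, hJ₀coupling, hcost₀.symm⟩
  have hm_le : sInf S ≤ m := by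
    calc sInf S ≤ Wass d p q₀ := csInf_le hSbdd hwS
      _ ≤ F c₀ := hw_le
      _ = m := hc₀.symm
  exact le_antisymm hm_le (le_csInf ⟨_, hwS⟩ hlow)
end

section
/- Fix n ≥ 1. The variation of information VI is a metric on the set of partitions of [n]: for all partitions ρ1, ρ2, ρ3 of [n], (i) VI(ρ1,ρ2) ≥ 0, (ii) VI(ρ1,ρ2) = 0 if and only if ρ1 = ρ2, (iii) VI(ρ1,ρ2) = VI(ρ2,ρ1), and (iv) VI(ρ1,ρ3) ≤ VI(ρ1,ρ2) + VI(ρ2,ρ3). -/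
open scoped Classical

/-- The cluster of `ρ` containing `i`, where a partition of `{1,…,n}` is represented by the
equivalence relation (`Setoid`) whose classes are the clusters. -/
noncomputable def cluster {n : ℕ} (ρ : Setoid (Fin n)) (i : Fin n) : Finset (Fin n) :=
  Finset.univ.filter (fun j => ρ.r i j)

/-- The pointwise contribution of `i` to the variation of information between `ρ1` and `ρ2`. -/
noncomputable def VIC {n : ℕ} (ρ1 ρ2 : Setoid (Fin n)) (i : Fin n) : ℝ :=
  (1 / (n : ℝ)) * (Real.logb 2 (((cluster ρ1 i).card : ℝ) / n) +
    Real.logb 2 (((cluster ρ2 i).card : ℝ) / n) -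
    2 * Real.logb 2 (((cluster ρ1 i ∩ cluster ρ2 i).card : ℝ) / n))

/-- The variation of information between the partitions `ρ1` and `ρ2`. -/
noncomputable def VI {n : ℕ} (ρ1 ρ2 : Setoid (Fin n)) : ℝ :=
  ∑ i, VIC ρ1 ρ2 i

section auxiliary

variable {n : ℕ}

lemma mem_cluster {ρ : Setoid (Fin n)} {i j : Fin n} : j ∈ cluster ρ i ↔ ρ.r i j := by
  simp [cluster]

lemma self_mem_cluster (ρ : Setoid (Fin n)) (i : Fin n) : i ∈ cluster ρ i :=
  mem_cluster.2 (ρ.refl i)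

lemma cluster_card_pos (ρ : Setoid (Fin n)) (i : Fin n) : 0 < (cluster ρ i).card :=
  Finset.card_pos.2 ⟨i, self_mem_cluster ρ i⟩

lemma cluster_eq_of_rel {ρ : Setoid (Fin n)} {i j : Fin n} (h : ρ.r i j) :
    cluster ρ i = cluster ρ j := by
  ext k
  simp only [mem_cluster]
  exact ⟨fun hk => ρ.trans (ρ.symm h) hk, fun hk => ρ.trans h hk⟩

lemma inter2_card_pos (ρ σ : Setoid (Fin n)) (i : Fin n) :
    0 < (cluster ρ i ∩ cluster σ i).card :=
  Finset.card_pos.2 ⟨i, Finset.mem_inter.2 ⟨self_mem_cluster ρ i, self_mem_cluster σ i⟩⟩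

lemma inter3_card_pos (ρ σ τ : Setoid (Fin n)) (i : Fin n) :
    0 < (cluster ρ i ∩ cluster σ i ∩ cluster τ i).card :=
  Finset.card_pos.2 ⟨i, Finset.mem_inter.2 ⟨Finset.mem_inter.2
    ⟨self_mem_cluster ρ i, self_mem_cluster σ i⟩, self_mem_cluster τ i⟩⟩

/-- The key counting estimate behind the triangle inequality. -/
lemma sum_y_le (ρ1 ρ2 ρ3 : Setoid (Fin n)) :
    ∑ i : Fin n, ((cluster ρ1 i ∩ cluster ρ2 i).card : ℝ) *
        ((cluster ρ2 i ∩ cluster ρ3 i).card : ℝ) *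
        ((((cluster ρ2 i).card : ℝ)) *
          ((cluster ρ1 i ∩ cluster ρ2 i ∩ cluster ρ3 i).card : ℝ))⁻¹ ≤ n := by
  set c : Fin n → ℝ := fun i => ((((cluster ρ2 i).card : ℝ)) *
      ((cluster ρ1 i ∩ cluster ρ2 i ∩ cluster ρ3 i).card : ℝ))⁻¹ with hc
  set g : Fin n → Fin n → Fin n → ℝ := fun i j k =>
    if (ρ1.r i j ∧ ρ2.r i j) ∧ (ρ2.r i k ∧ ρ3.r i k) then c i else 0 with hg
  have hterm : ∀ i : Fin n,
      ((cluster ρ1 i ∩ cluster ρ2 i).card : ℝ) * ((cluster ρ2 i ∩ cluster ρ3 i).card : ℝ) * c i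
        = ∑ j : Fin n, ∑ k : Fin n, g i j k := by
    intro i
    have h1 : cluster ρ1 i ∩ cluster ρ2 i =
        Finset.univ.filter (fun j => ρ1.r i j ∧ ρ2.r i j) := by
      ext j; simp [cluster]
    have h2 : cluster ρ2 i ∩ cluster ρ3 i =
        Finset.univ.filter (fun k => ρ2.r i k ∧ ρ3.r i k) := by
      ext k; simp [cluster]
    have e1 : ∀ j : Fin n, (∑ k : Fin n, g i j k)
        = (if (ρ1.r i j ∧ ρ2.r i j) then (1:ℝ) else 0) *
          (((Finset.univ.filter (fun k => ρ2.r i k ∧ ρ3.r i k)).card : ℝ) * c i) := by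
      intro j
      by_cases hp : ρ1.r i j ∧ ρ2.r i j
      · simp only [hg, hp, true_and, if_true, one_mul]
        rw [← Finset.sum_filter, Finset.sum_const, nsmul_eq_mul]
      · simp [hg, hp]
    rw [Finset.sum_congr rfl (fun j _ => e1 j), ← Finset.sum_mul, Finset.sum_boole, h1, h2]
    ring
  rw [Finset.sum_congr rfl (fun i _ => hterm i), Finset.sum_comm]
  have hswap : ∀ j : Fin n, (∑ i : Fin n, ∑ k : Fin n, g i j k)
      = ∑ k : Fin n, ∑ i : Fin n, g i j k := fun j => Finset.sum_comm
  rw [Finset.sum_congr rfl (fun j _ => hswap j)]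
  have hjk : ∀ j k : Fin n, (∑ i : Fin n, g i j k)
      ≤ if ρ2.r j k then ((cluster ρ2 j).card : ℝ)⁻¹ else 0 := by
    intro j k
    by_cases hex : ∃ i0 : Fin n, (ρ1.r i0 j ∧ ρ2.r i0 j) ∧ (ρ2.r i0 k ∧ ρ3.r i0 k)
    · obtain ⟨i0, ⟨h1j, h2j⟩, h2k, h3k⟩ := hex
      have hjkrel : ρ2.r j k := ρ2.trans (ρ2.symm h2j) h2k
      rw [if_pos hjkrel]
      have hDcond : ∀ i : Fin n,
          ((ρ1.r i j ∧ ρ2.r i j) ∧ (ρ2.r i k ∧ ρ3.r i k)) ↔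
          i ∈ cluster ρ1 i0 ∩ cluster ρ2 i0 ∩ cluster ρ3 i0 := by
        intro i
        simp only [Finset.mem_inter, mem_cluster]
        constructor
        · rintro ⟨⟨a1, a2⟩, a2k, a3⟩
          exact ⟨⟨ρ1.trans h1j (ρ1.symm a1), ρ2.trans h2j (ρ2.symm a2)⟩,
            ρ3.trans h3k (ρ3.symm a3)⟩
        · rintro ⟨⟨b1, b2⟩, b3⟩
          exact ⟨⟨ρ1.trans (ρ1.symm b1) h1j, ρ2.trans (ρ2.symm b2) h2j⟩,
            ρ2.trans (ρ2.symm b2) h2k, ρ3.trans (ρ3.symm b3) h3k⟩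
      have hconst : ∀ i ∈ cluster ρ1 i0 ∩ cluster ρ2 i0 ∩ cluster ρ3 i0, c i = c i0 := by
        intro i hi
        simp only [Finset.mem_inter, mem_cluster] at hi
        obtain ⟨⟨b1, b2⟩, b3⟩ := hi
        have e1 : cluster ρ1 i = cluster ρ1 i0 := (cluster_eq_of_rel b1).symm
        have e2 : cluster ρ2 i = cluster ρ2 i0 := (cluster_eq_of_rel b2).symm
        have e3 : cluster ρ3 i = cluster ρ3 i0 := (cluster_eq_of_rel b3).symm
        simp only [hc, e1, e2, e3]
      have hsum : (∑ i : Fin n, g i j k)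
          = ((cluster ρ1 i0 ∩ cluster ρ2 i0 ∩ cluster ρ3 i0).card : ℝ) * c i0 := by
        have : (∑ i : Fin n, g i j k)
            = ∑ i ∈ cluster ρ1 i0 ∩ cluster ρ2 i0 ∩ cluster ρ3 i0, c i := by
          rw [hg]
          simp only [fun i => hDcond i]
          rw [← Finset.sum_filter]
          congr 1
          ext i
          simp
        rw [this, Finset.sum_congr rfl hconst, Finset.sum_const, nsmul_eq_mul]
      have hm : ((cluster ρ1 i0 ∩ cluster ρ2 i0 ∩ cluster ρ3 i0).card : ℝ) ≠ 0 := by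
        exact_mod_cast (inter3_card_pos ρ1 ρ2 ρ3 i0).ne'
      have ha : ((cluster ρ2 i0).card : ℝ) ≠ 0 := by
        exact_mod_cast (cluster_card_pos ρ2 i0).ne'
      have he2 : cluster ρ2 i0 = cluster ρ2 j := cluster_eq_of_rel h2j
      refine le_of_eq ?_
      rw [hsum, hc]
      simp only []
      rw [he2] at ha
      rw [← he2]
      field_simp
    · have : ∀ i : Fin n, g i j k = 0 := by
        intro i
        rw [hg]
        simp only [ite_eq_right_iff]
        intro h
        exact absurd ⟨i, h⟩ hex
      rw [Finset.sum_congr rfl (fun i _ => this i), Finset.sum_const, smul_zero]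
      split_ifs
      · positivity
      · exact le_refl 0
  calc (∑ j : Fin n, ∑ k : Fin n, ∑ i : Fin n, g i j k)
      ≤ ∑ j : Fin n, ∑ k : Fin n, (if ρ2.r j k then ((cluster ρ2 j).card : ℝ)⁻¹ else 0) := by
        apply Finset.sum_le_sum; intro j _; apply Finset.sum_le_sum; intro k _; exact hjk j k
    _ = ∑ j : Fin n, (1:ℝ) := by
        apply Finset.sum_congr rfl
        intro j _
        rw [← Finset.sum_filter, Finset.sum_const, nsmul_eq_mul]
        have : Finset.univ.filter (fun k => ρ2.r j k) = cluster ρ2 j := rfl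
        rw [this]
        have ha : ((cluster ρ2 j).card : ℝ) ≠ 0 := by
          exact_mod_cast (cluster_card_pos ρ2 j).ne'
        field_simp
    _ = n := by simp

/-- Jensen's inequality specialised to the logarithm. -/
lemma sum_log_nonpos (hn : 1 ≤ n) {y : Fin n → ℝ} (hy : ∀ i, 0 < y i)
    (hsum : ∑ i, y i ≤ n) : ∑ i, Real.log (y i) ≤ 0 := by
  have hn0 : (0:ℝ) < n := by exact_mod_cast hn
  have hw : ∀ i ∈ (Finset.univ : Finset (Fin n)), (0:ℝ) ≤ 1 / n := fun _ _ => by positivity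
  have hw1 : ∑ _i : Fin n, (1:ℝ) / n = 1 := by
    rw [Finset.sum_const, nsmul_eq_mul]
    field_simp
    simp
  have hmem : ∀ i ∈ (Finset.univ : Finset (Fin n)), y i ∈ Set.Ioi (0:ℝ) := fun i _ => hy i
  have hj := (strictConcaveOn_log_Ioi.concaveOn).le_map_sum hw hw1 hmem
  simp only [smul_eq_mul] at hj
  rw [← Finset.mul_sum, ← Finset.mul_sum] at hj
  have h2 : Real.log (1 / (n:ℝ) * ∑ i, y i) ≤ 0 := by
    apply Real.log_nonpos
    · have hypos : (0:ℝ) < ∑ i, y i :=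
        Finset.sum_pos (fun i _ => hy i) ⟨⟨0, hn⟩, Finset.mem_univ _⟩
      positivity
    · rw [div_mul_eq_mul_div, one_mul, div_le_one hn0]
      exact hsum
  have h3 := hj.trans h2
  nlinarith [one_div_pos.2 hn0]

lemma VIC_eq (hn : 1 ≤ n) (ρ σ : Setoid (Fin n)) (i : Fin n) :
    VIC ρ σ i = (1 / (n : ℝ)) * (Real.logb 2 ((cluster ρ i).card : ℝ) +
      Real.logb 2 ((cluster σ i).card : ℝ) -
      2 * Real.logb 2 (((cluster ρ i ∩ cluster σ i).card : ℝ))) := by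
  have hn0 : ((n:ℝ)) ≠ 0 := by positivity
  have ha : ((cluster ρ i).card : ℝ) ≠ 0 := by
    exact_mod_cast (cluster_card_pos ρ i).ne'
  have hb : ((cluster σ i).card : ℝ) ≠ 0 := by
    exact_mod_cast (cluster_card_pos σ i).ne'
  have hm : (((cluster ρ i ∩ cluster σ i).card : ℝ)) ≠ 0 := by
    exact_mod_cast (inter2_card_pos ρ σ i).ne'
  unfold VIC
  rw [Real.logb_div ha hn0, Real.logb_div hb hn0, Real.logb_div hm hn0]
  ring

lemma VIC_nonneg (hn : 1 ≤ n) (ρ σ : Setoid (Fin n)) (i : Fin n) : 0 ≤ VIC ρ σ i := by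
  rw [VIC_eq hn]
  have hmpos : (0:ℝ) < ((cluster ρ i ∩ cluster σ i).card : ℝ) := by
    exact_mod_cast inter2_card_pos ρ σ i
  have hapos : (0:ℝ) < ((cluster ρ i).card : ℝ) := by exact_mod_cast cluster_card_pos ρ i
  have hbpos : (0:ℝ) < ((cluster σ i).card : ℝ) := by exact_mod_cast cluster_card_pos σ i
  have hma : ((cluster ρ i ∩ cluster σ i).card : ℝ) ≤ ((cluster ρ i).card : ℝ) := by
    exact_mod_cast Finset.card_le_card (Finset.inter_subset_left)
  have hmb : ((cluster ρ i ∩ cluster σ i).card : ℝ) ≤ ((cluster σ i).card : ℝ) := by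
    exact_mod_cast Finset.card_le_card (Finset.inter_subset_right)
  have l1 := (Real.logb_le_logb one_lt_two hmpos hapos).2 hma
  have l2 := (Real.logb_le_logb one_lt_two hmpos hbpos).2 hmb
  have : (0:ℝ) ≤ 1 / (n:ℝ) := by positivity
  nlinarith

end auxiliary

/-- The variation of information is a metric on the set of partitions of `{1,…,n}`:
non-negative, zero exactly on equal partitions, symmetric, and satisfying the triangle
inequality. -/
theorem vi_is_metric {n : ℕ} (hn : 1 ≤ n) (ρ1 ρ2 ρ3 : Setoid (Fin n)) :
    0 ≤ VI ρ1 ρ2 ∧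
    (VI ρ1 ρ2 = 0 ↔ ρ1 = ρ2) ∧
    VI ρ1 ρ2 = VI ρ2 ρ1 ∧
    VI ρ1 ρ3 ≤ VI ρ1 ρ2 + VI ρ2 ρ3 := by
  refine ⟨Finset.sum_nonneg (fun i _ => VIC_nonneg hn ρ1 ρ2 i), ⟨?_, ?_⟩, ?_, ?_⟩
  · -- VI = 0 → ρ1 = ρ2
    intro hVI
    have hall : ∀ i ∈ (Finset.univ : Finset (Fin n)), VIC ρ1 ρ2 i = 0 :=
      (Finset.sum_eq_zero_iff_of_nonneg (fun i _ => VIC_nonneg hn ρ1 ρ2 i)).1 hVI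
    have hcl : ∀ i : Fin n, cluster ρ1 i = cluster ρ2 i := by
      intro i
      have h0 := hall i (Finset.mem_univ i)
      rw [VIC_eq hn] at h0
      have hn0 : (0:ℝ) < 1 / (n:ℝ) := by
        have : (0:ℝ) < n := by exact_mod_cast hn
        positivity
      have hE : Real.logb 2 ((cluster ρ1 i).card : ℝ) +
          Real.logb 2 ((cluster ρ2 i).card : ℝ) -
          2 * Real.logb 2 (((cluster ρ1 i ∩ cluster ρ2 i).card : ℝ)) = 0 := by
        rcases mul_eq_zero.1 h0 with h | h
        · exact absurd h hn0.ne'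
        · exact h
      have hmpos : (0:ℝ) < ((cluster ρ1 i ∩ cluster ρ2 i).card : ℝ) := by
        exact_mod_cast inter2_card_pos ρ1 ρ2 i
      have hapos : (0:ℝ) < ((cluster ρ1 i).card : ℝ) := by
        exact_mod_cast cluster_card_pos ρ1 i
      have hbpos : (0:ℝ) < ((cluster ρ2 i).card : ℝ) := by
        exact_mod_cast cluster_card_pos ρ2 i
      have hma : ((cluster ρ1 i ∩ cluster ρ2 i).card : ℝ) ≤ ((cluster ρ1 i).card : ℝ) := by
        exact_mod_cast Finset.card_le_card (Finset.inter_subset_left)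
      have hmb : ((cluster ρ1 i ∩ cluster ρ2 i).card : ℝ) ≤ ((cluster ρ2 i).card : ℝ) := by
        exact_mod_cast Finset.card_le_card (Finset.inter_subset_right)
      have l1 := (Real.logb_le_logb one_lt_two hmpos hapos).2 hma
      have l2 := (Real.logb_le_logb one_lt_two hmpos hbpos).2 hmb
      have e1 : ((cluster ρ1 i).card : ℝ) ≤ ((cluster ρ1 i ∩ cluster ρ2 i).card : ℝ) :=
        (Real.logb_le_logb one_lt_two hapos hmpos).1 (by linarith)
      have e2 : ((cluster ρ2 i).card : ℝ) ≤ ((cluster ρ1 i ∩ cluster ρ2 i).card : ℝ) :=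
        (Real.logb_le_logb one_lt_two hbpos hmpos).1 (by linarith)
      have c1 : (cluster ρ1 i).card ≤ (cluster ρ1 i ∩ cluster ρ2 i).card := by
        exact_mod_cast e1
      have c2 : (cluster ρ2 i).card ≤ (cluster ρ1 i ∩ cluster ρ2 i).card := by
        exact_mod_cast e2
      have s1 : cluster ρ1 i ∩ cluster ρ2 i = cluster ρ1 i :=
        Finset.eq_of_subset_of_card_le Finset.inter_subset_left c1
      have s2 : cluster ρ1 i ∩ cluster ρ2 i = cluster ρ2 i :=
        Finset.eq_of_subset_of_card_le Finset.inter_subset_right c2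
      rw [← s1, s2]
    apply Setoid.ext
    intro a b
    constructor
    · intro h
      exact mem_cluster.1 (hcl a ▸ mem_cluster.2 h)
    · intro h
      exact mem_cluster.1 ((hcl a).symm ▸ mem_cluster.2 h)
  · -- ρ1 = ρ2 → VI = 0
    intro h
    subst h
    apply Finset.sum_eq_zero
    intro i _
    unfold VIC
    rw [Finset.inter_self]
    ring
  · -- symmetry
    apply Finset.sum_congr rfl
    intro i _
    unfold VIC
    rw [Finset.inter_comm]
    ring
  · -- triangle inequality
    have hL2 : Real.log 2 ≠ 0 := (Real.log_pos one_lt_two).ne'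
    have hn0 : ((n:ℝ)) ≠ 0 := by positivity
    -- positivity facts
    have a2pos : ∀ i : Fin n, (0:ℝ) < ((cluster ρ2 i).card : ℝ) := fun i => by
      exact_mod_cast cluster_card_pos ρ2 i
    have m12pos : ∀ i : Fin n, (0:ℝ) < ((cluster ρ1 i ∩ cluster ρ2 i).card : ℝ) := fun i => by
      exact_mod_cast inter2_card_pos ρ1 ρ2 i
    have m23pos : ∀ i : Fin n, (0:ℝ) < ((cluster ρ2 i ∩ cluster ρ3 i).card : ℝ) := fun i => by
      exact_mod_cast inter2_card_pos ρ2 ρ3 i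
    have m13pos : ∀ i : Fin n, (0:ℝ) < ((cluster ρ1 i ∩ cluster ρ3 i).card : ℝ) := fun i => by
      exact_mod_cast inter2_card_pos ρ1 ρ3 i
    have m123pos : ∀ i : Fin n,
        (0:ℝ) < ((cluster ρ1 i ∩ cluster ρ2 i ∩ cluster ρ3 i).card : ℝ) := fun i => by
      exact_mod_cast inter3_card_pos ρ1 ρ2 ρ3 i
    -- the key log inequality
    have key : ∑ i : Fin n, (Real.log ((cluster ρ1 i ∩ cluster ρ2 i).card : ℝ) +
        Real.log ((cluster ρ2 i ∩ cluster ρ3 i).card : ℝ) -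
        Real.log ((cluster ρ2 i).card : ℝ) -
        Real.log ((cluster ρ1 i ∩ cluster ρ3 i).card : ℝ)) ≤ 0 := by
      have hsub : ∀ i : Fin n, cluster ρ1 i ∩ cluster ρ2 i ∩ cluster ρ3 i ⊆
          cluster ρ1 i ∩ cluster ρ3 i := by
        intro i x hx
        simp only [Finset.mem_inter] at hx ⊢
        exact ⟨hx.1.1, hx.2⟩
      have h1 : ∀ i : Fin n,
          Real.log ((cluster ρ1 i ∩ cluster ρ2 i ∩ cluster ρ3 i).card : ℝ) ≤
          Real.log ((cluster ρ1 i ∩ cluster ρ3 i).card : ℝ) := fun i =>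
        Real.log_le_log (m123pos i) (by exact_mod_cast Finset.card_le_card (hsub i))
      have h2 : ∑ i : Fin n, (Real.log ((cluster ρ1 i ∩ cluster ρ2 i).card : ℝ) +
          Real.log ((cluster ρ2 i ∩ cluster ρ3 i).card : ℝ) -
          Real.log ((cluster ρ2 i).card : ℝ) -
          Real.log ((cluster ρ1 i ∩ cluster ρ2 i ∩ cluster ρ3 i).card : ℝ)) ≤ 0 := by
        have hlog : ∀ i : Fin n,
            Real.log (((cluster ρ1 i ∩ cluster ρ2 i).card : ℝ) *
              ((cluster ρ2 i ∩ cluster ρ3 i).card : ℝ) *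
              ((((cluster ρ2 i).card : ℝ)) *
                ((cluster ρ1 i ∩ cluster ρ2 i ∩ cluster ρ3 i).card : ℝ))⁻¹)
            = Real.log ((cluster ρ1 i ∩ cluster ρ2 i).card : ℝ) +
              Real.log ((cluster ρ2 i ∩ cluster ρ3 i).card : ℝ) -
              Real.log ((cluster ρ2 i).card : ℝ) -
              Real.log ((cluster ρ1 i ∩ cluster ρ2 i ∩ cluster ρ3 i).card : ℝ) := by
          intro i
          rw [Real.log_mul (mul_pos (m12pos i) (m23pos i)).ne'
              (inv_pos.2 (mul_pos (a2pos i) (m123pos i))).ne',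
            Real.log_mul (m12pos i).ne' (m23pos i).ne', Real.log_inv,
            Real.log_mul (a2pos i).ne' (m123pos i).ne']
          ring
        rw [← Finset.sum_congr rfl (fun i _ => hlog i)]
        exact sum_log_nonpos hn (fun i => mul_pos (mul_pos (m12pos i) (m23pos i))
          (inv_pos.2 (mul_pos (a2pos i) (m123pos i)))) (sum_y_le ρ1 ρ2 ρ3)
      calc ∑ i : Fin n, (Real.log ((cluster ρ1 i ∩ cluster ρ2 i).card : ℝ) +
            Real.log ((cluster ρ2 i ∩ cluster ρ3 i).card : ℝ) -
            Real.log ((cluster ρ2 i).card : ℝ) -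
            Real.log ((cluster ρ1 i ∩ cluster ρ3 i).card : ℝ))
          ≤ ∑ i : Fin n, (Real.log ((cluster ρ1 i ∩ cluster ρ2 i).card : ℝ) +
            Real.log ((cluster ρ2 i ∩ cluster ρ3 i).card : ℝ) -
            Real.log ((cluster ρ2 i).card : ℝ) -
            Real.log ((cluster ρ1 i ∩ cluster ρ2 i ∩ cluster ρ3 i).card : ℝ)) := by
            apply Finset.sum_le_sum
            intro i _
            have := h1 i
            linarith
        _ ≤ 0 := h2
    -- expand the pointwise difference
    have expand : ∀ i : Fin n, VIC ρ1 ρ2 i + VIC ρ2 ρ3 i - VIC ρ1 ρ3 i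
        = (2 / ((n:ℝ) * Real.log 2)) * (Real.log ((cluster ρ2 i).card : ℝ) +
          Real.log ((cluster ρ1 i ∩ cluster ρ3 i).card : ℝ) -
          Real.log ((cluster ρ1 i ∩ cluster ρ2 i).card : ℝ) -
          Real.log ((cluster ρ2 i ∩ cluster ρ3 i).card : ℝ)) := by
      intro i
      rw [VIC_eq hn ρ1 ρ2 i, VIC_eq hn ρ2 ρ3 i, VIC_eq hn ρ1 ρ3 i]
      simp only [Real.logb]
      field_simp
      ring
    have hdiff : 0 ≤ VI ρ1 ρ2 + VI ρ2 ρ3 - VI ρ1 ρ3 := by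
      have e : VI ρ1 ρ2 + VI ρ2 ρ3 - VI ρ1 ρ3
          = ∑ i : Fin n, (VIC ρ1 ρ2 i + VIC ρ2 ρ3 i - VIC ρ1 ρ3 i) := by
        unfold VI
        rw [← Finset.sum_add_distrib, ← Finset.sum_sub_distrib]
      rw [e, Finset.sum_congr rfl (fun i _ => expand i), ← Finset.mul_sum]
      apply mul_nonneg
      · have : (0:ℝ) < n := by exact_mod_cast hn
        have := Real.log_pos one_lt_two
        positivity
      · have hzero : ∑ i : Fin n, ((Real.log ((cluster ρ2 i).card : ℝ) +
            Real.log ((cluster ρ1 i ∩ cluster ρ3 i).card : ℝ) -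
            Real.log ((cluster ρ1 i ∩ cluster ρ2 i).card : ℝ) -
            Real.log ((cluster ρ2 i ∩ cluster ρ3 i).card : ℝ)) +
            (Real.log ((cluster ρ1 i ∩ cluster ρ2 i).card : ℝ) +
            Real.log ((cluster ρ2 i ∩ cluster ρ3 i).card : ℝ) -
            Real.log ((cluster ρ2 i).card : ℝ) -
            Real.log ((cluster ρ1 i ∩ cluster ρ3 i).card : ℝ))) = 0 :=
          Finset.sum_eq_zero (fun i _ => by ring)
        rw [Finset.sum_add_distrib] at hzero
        linarith
    linarith
end
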